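/- Assume dλ² ≤ 1. There exists a constant C depending only on θ such that for all n ≥ 0: |E[Z₁(n)] − 1 − (2/θ)dλ²·x_{n;θ} − (2/θ²)d(d−1)λ⁴·x_{n;θ}²| ≤ C·x_{n;θ}³. -/

import Mathlib

/-!
Conditioned on `σ_ρ = 1`, the subtrees of the root's children are independent, and each child is
in state `1` with probability `λ + (1 - λ)θ/2` and otherwise distributed as `π`. Under `π` the
posterior `f_n(1, σ(n))` has mean `θ/2`, so every factor of `Z₁` has mean `1 + (2λ²/θ) x` and
`E Z₁ = (1 + (2λ²/θ) x)^d` exactly. The claim is the second-order binomial expansion of this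
power: since `0 ≤ x ≤ 1` (`θx/2` is the variance of `f_n(1, σ(n))`), the remainder is at most
`x³ (1 + 2λ²/θ)^d ≤ x³ e^{2dλ²/θ} ≤ e^{2/θ} x³`.
-/

open Finset Filter

namespace Broadcast

/-- The root distribution `π = (θ/2, θ/2, (1-θ)/2, (1-θ)/2)`. -/
noncomputable def rootDist (θ : ℝ) (i : Fin 4) : ℝ :=
  if (i : ℕ) < 2 then θ / 2 else (1 - θ) / 2

/-- The transition matrix `P i j = λ · 1{i=j} + (1-λ) π_j`. -/
noncomputable def trans (θ lam : ℝ) (i j : Fin 4) : ℝ :=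
  (if i = j then lam else 0) + (1 - lam) * rootDist θ j

/-- Vertices at level `n` of the infinite rooted `d`-ary tree, encoded as paths. -/
abbrev Vtx (d n : ℕ) := Fin n → Fin d

/-- Configurations (assignments of states) on level `n`. -/
abbrev Config (d n : ℕ) := Vtx d n → Fin 4

/-- Restriction of a level-`(n+1)` configuration to the subtree of the `j`-th child
of the root. -/
def restrict {d n : ℕ} (j : Fin d) (A : Config d (n + 1)) : Config d n :=
  fun p => A (Fin.cons j p)

/-- `lik θ λ d n i A` is the probability of observing the configuration `A` on level `n`,
given that the root is in state `i` (the broadcasting process). -/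
noncomputable def lik (θ lam : ℝ) (d : ℕ) : (n : ℕ) → Fin 4 → Config d n → ℝ
  | 0, i, A => if A Fin.elim0 = i then 1 else 0
  | n + 1, i, A =>
      ∏ j : Fin d, ∑ k : Fin 4, trans θ lam i k * lik θ lam d n k (restrict j A)

/-- Unconditional probability of observing the configuration `A` on level `n`. -/
noncomputable def marg (θ lam : ℝ) (d n : ℕ) (A : Config d n) : ℝ :=
  ∑ i : Fin 4, rootDist θ i * lik θ lam d n i A

/-- The posterior `f_n(i, A) = P(σ_ρ = i ∣ σ(n) = A)`. -/
noncomputable def post (θ lam : ℝ) (d n : ℕ) (i : Fin 4) (A : Config d n) : ℝ :=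
  rootDist θ i * lik θ lam d n i A / marg θ lam d n A

/-- Expectation of `g(σ(n))` conditioned on the root being in state `r`,
i.e. `E g(σ^r(n))`. -/
noncomputable def condE (θ lam : ℝ) (d n : ℕ) (r : Fin 4) (g : Config d n → ℝ) : ℝ :=
  ∑ A : Config d n, lik θ lam d n r A * g A

/-- Unconditional expectation of `g(σ(n))`. -/
noncomputable def uncondE (θ lam : ℝ) (d n : ℕ) (g : Config d n → ℝ) : ℝ :=
  ∑ A : Config d n, marg θ lam d n A * g A

/-- `x_{n;θ} = E f_n(1, σ¹(n)) - θ/2`. -/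
noncomputable def xT (θ lam : ℝ) (d n : ℕ) : ℝ :=
  condE θ lam d n 0 (fun A => post θ lam d n 0 A) - θ / 2

/-- `y_{n;θ} = E f_n(2, σ¹(n)) - θ/2`. -/
noncomputable def yT (θ lam : ℝ) (d n : ℕ) : ℝ :=
  condE θ lam d n 0 (fun A => post θ lam d n 1 A) - θ / 2

/-- `z_{n;θ} = E f_n(1, σ³(n)) - θ/2`. -/
noncomputable def zT (θ lam : ℝ) (d n : ℕ) : ℝ :=
  condE θ lam d n 2 (fun A => post θ lam d n 0 A) - θ / 2

/-- `x_{n;1-θ} = E f_n(3, σ³(n)) - (1-θ)/2`. -/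
noncomputable def xH (θ lam : ℝ) (d n : ℕ) : ℝ :=
  condE θ lam d n 2 (fun A => post θ lam d n 2 A) - (1 - θ) / 2

/-- `y_{n;1-θ} = E f_n(4, σ³(n)) - (1-θ)/2`. -/
noncomputable def yH (θ lam : ℝ) (d n : ℕ) : ℝ :=
  condE θ lam d n 2 (fun A => post θ lam d n 3 A) - (1 - θ) / 2

/-- `z_{n;1-θ} = E f_n(3, σ¹(n)) - (1-θ)/2`. -/
noncomputable def zH (θ lam : ℝ) (d n : ℕ) : ℝ :=
  condE θ lam d n 0 (fun A => post θ lam d n 2 A) - (1 - θ) / 2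

/-- `u_{n;θ} = E (f_n(1, σ¹(n)) - θ/2)²`. -/
noncomputable def uT (θ lam : ℝ) (d n : ℕ) : ℝ :=
  condE θ lam d n 0 (fun A => (post θ lam d n 0 A - θ / 2) ^ 2)

/-- `v_{n;θ} = E (f_n(2, σ¹(n)) - θ/2)²`. -/
noncomputable def vT (θ lam : ℝ) (d n : ℕ) : ℝ :=
  condE θ lam d n 0 (fun A => (post θ lam d n 1 A - θ / 2) ^ 2)

/-- `w_{n;θ} = E (f_n(1, σ³(n)) - θ/2)²`. -/
noncomputable def wT (θ lam : ℝ) (d n : ℕ) : ℝ :=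
  condE θ lam d n 2 (fun A => (post θ lam d n 0 A - θ / 2) ^ 2)

/-- `w_{n;1-θ} = E (f_n(3, σ¹(n)) - (1-θ)/2)²`. -/
noncomputable def wH (θ lam : ℝ) (d n : ℕ) : ℝ :=
  condE θ lam d n 0 (fun A => (post θ lam d n 2 A - (1 - θ) / 2) ^ 2)

/-- `Y_{ij}(n) = f_n(i, σ_j(n+1))`, viewed as a function of the level-`(n+1)`
configuration. -/
noncomputable def Yf (θ lam : ℝ) (d n : ℕ) (i : Fin 4) (j : Fin d)
    (A : Config d (n + 1)) : ℝ :=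
  post θ lam d n i (restrict j A)

/-- `Z_i(n)`, viewed as a function of the level-`(n+1)` configuration. -/
noncomputable def Zf (θ lam : ℝ) (d n : ℕ) (i : Fin 4) (A : Config d (n + 1)) : ℝ :=
  if (i : ℕ) < 2 then
    ∏ j : Fin d, (1 + (2 * lam / θ) * (Yf θ lam d n i j A - θ / 2))
  else
    ∏ j : Fin d, (1 + (2 * lam / (1 - θ)) * (Yf θ lam d n i j A - (1 - θ) / 2))

/-- `S = (θ/2)Z₁ + (θ/2)Z₂ + ((1-θ)/2)Z₃ + ((1-θ)/2)Z₄`. -/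
noncomputable def Sf (θ lam : ℝ) (d n : ℕ) (A : Config d (n + 1)) : ℝ :=
  θ / 2 * Zf θ lam d n 0 A + θ / 2 * Zf θ lam d n 1 A
    + (1 - θ) / 2 * Zf θ lam d n 2 A + (1 - θ) / 2 * Zf θ lam d n 3 A

/-- Total variation distance between the laws of `σ^i(n)` and `σ^j(n)`. -/
noncomputable def dTV (θ lam : ℝ) (d n : ℕ) (i j : Fin 4) : ℝ :=
  (∑ A : Config d n, |lik θ lam d n i A - lik θ lam d n j A|) / 2

/-- The model is reconstructible if for some pair of root states the total variation
distance between the conditioned level-`n` configurations does not vanish. -/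
def Reconstructible (θ lam : ℝ) (d : ℕ) : Prop :=
  ∃ i j : Fin 4, 0 < Filter.limsup (fun n => dTV θ lam d n i j) Filter.atTop

/-- Probability that the root is in state `i` and the states at the vertices
`v 1, …, v k ∈ L(M)` are `c 1, …, c k`. -/
noncomputable def jointRootEvent (θ lam : ℝ) (d M k : ℕ) (v : Fin k → Vtx d M)
    (c : Fin k → Fin 4) (i : Fin 4) : ℝ :=
  ∑ A : Config d M,
    if ∀ t, A (v t) = c t then rootDist θ i * lik θ lam d M i A else 0

/-- Conditional probability `P(σ_ρ = i ∣ σ_{v t} = c t, 1 ≤ t ≤ k)`. -/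
noncomputable def condRoot (θ lam : ℝ) (d M k : ℕ) (v : Fin k → Vtx d M)
    (c : Fin k → Fin 4) (i : Fin 4) : ℝ :=
  jointRootEvent θ lam d M k v c i / ∑ i' : Fin 4, jointRootEvent θ lam d M k v c i'

lemma rootDist_zero (θ : ℝ) : rootDist θ 0 = θ / 2 := by simp [rootDist]

lemma rootDist_nonneg {θ : ℝ} (hθ : θ ∈ Set.Icc (0 : ℝ) 1) (i : Fin 4) : 0 ≤ rootDist θ i := by
  obtain ⟨h0, h1⟩ := hθ
  unfold rootDist; split <;> linarith

lemma sum_rootDist (θ : ℝ) : ∑ i, rootDist θ i = 1 := by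
  simp [Fin.sum_univ_four, rootDist]; ring

lemma sum_trans (θ lam : ℝ) (i : Fin 4) : ∑ k, trans θ lam i k = 1 := by
  simp [trans, sum_add_distrib, ← mul_sum, sum_rootDist]

lemma lik_nonneg {θ lam : ℝ} {d : ℕ} (htr : ∀ i j, 0 ≤ trans θ lam i j) :
    ∀ (n : ℕ) (i : Fin 4) (A : Config d n), 0 ≤ lik θ lam d n i A
  | 0, i, A => by unfold lik; positivity
  | n + 1, i, A => prod_nonneg fun j _ => sum_nonneg fun k _ =>
      mul_nonneg (htr i k) (lik_nonneg htr n k _)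

def restrictEquiv (d n : ℕ) : Config d (n + 1) ≃ (Fin d → Config d n) :=
  ((Fin.consEquiv fun _ => Fin d).arrowCongr (Equiv.refl (Fin 4))).symm.trans
    (Equiv.curry _ _ _)

lemma sum_prod_restrict {d n : ℕ} (F : Fin d → Config d n → ℝ) :
    ∑ A : Config d (n + 1), ∏ j, F j (restrict j A) = ∏ j, ∑ B, F j B := by
  rw [Fintype.prod_sum]
  exact Fintype.sum_equiv (restrictEquiv d n) _ _ fun _ => rfl

section Expectations

variable {θ lam : ℝ} {d : ℕ}

lemma condE_prod_restrict (n : ℕ) (i : Fin 4) (g : Config d n → ℝ) :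
    condE θ lam d (n + 1) i (fun A => ∏ j, g (restrict j A))
      = (∑ k, trans θ lam i k * condE θ lam d n k g) ^ d := by
  have hstep (B : Config d n) :
      (∑ k, trans θ lam i k * lik θ lam d n k B) * g B
        = ∑ k, trans θ lam i k * (lik θ lam d n k B * g B) := by
    simp only [sum_mul, mul_assoc]
  simp only [condE, lik, ← prod_mul_distrib]
  rw [sum_prod_restrict (fun _ B => (∑ k, trans θ lam i k * lik θ lam d n k B) * g B),
    prod_const, card_univ, Fintype.card_fin]
  simp only [hstep]
  rw [sum_comm]
  simp only [← mul_sum]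

lemma sum_lik (n : ℕ) (i : Fin 4) : ∑ A, lik θ lam d n i A = 1 := by
  induction n generalizing i with
  | zero =>
    rw [Fintype.sum_equiv (Equiv.funUnique (Vtx d 0) (Fin 4)) (lik θ lam d 0 i)
      (fun c => if c = i then 1 else 0) fun _ => rfl]
    simp
  | succ n ih =>
    simpa [condE, ih, sum_trans] using
      condE_prod_restrict (θ := θ) (lam := lam) (d := d) n i fun _ => 1

lemma uncondE_eq_sum (n : ℕ) (g : Config d n → ℝ) :
    uncondE θ lam d n g = ∑ i, rootDist θ i * condE θ lam d n i g := by
  simp only [uncondE, marg, condE, sum_mul, mul_sum, mul_assoc]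
  exact sum_comm

lemma sum_marg (n : ℕ) : ∑ A, marg θ lam d n A = 1 := by
  simpa [uncondE, condE, sum_lik, sum_rootDist] using
    uncondE_eq_sum (θ := θ) (lam := lam) (d := d) n fun _ => 1

lemma sum_trans_mul_condE (n : ℕ) (i : Fin 4) (g : Config d n → ℝ) :
    ∑ k, trans θ lam i k * condE θ lam d n k g
      = lam * condE θ lam d n i g + (1 - lam) * uncondE θ lam d n g := by
  simp [trans, add_mul, sum_add_distrib, uncondE_eq_sum, mul_sum, mul_assoc]

lemma condE_affine (n : ℕ) (i : Fin 4) (g : Config d n → ℝ) (α β γ : ℝ) :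
    condE θ lam d n i (fun A => α + β * (g A - γ)) = α + β * (condE θ lam d n i g - γ) := by
  simp only [condE, mul_add, mul_sub, sum_add_distrib, sum_sub_distrib, ← sum_mul, sum_lik]
  simp only [mul_left_comm _ β, ← mul_sum]
  ring

lemma uncondE_affine (n : ℕ) (g : Config d n → ℝ) (α β γ : ℝ) :
    uncondE θ lam d n (fun A => α + β * (g A - γ)) = α + β * (uncondE θ lam d n g - γ) := by
  simp only [uncondE, mul_add, mul_sub, sum_add_distrib, sum_sub_distrib, ← sum_mul, sum_marg]
  simp only [mul_left_comm _ β, ← mul_sum]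
  ring

end Expectations

section Posterior

variable {θ lam : ℝ} {d n : ℕ}

lemma marg_nonneg (hθ : θ ∈ Set.Icc (0 : ℝ) 1) (htr : ∀ i j, 0 ≤ trans θ lam i j)
    (A : Config d n) : 0 ≤ marg θ lam d n A :=
  sum_nonneg fun i _ => mul_nonneg (rootDist_nonneg hθ i) (lik_nonneg htr n i A)

lemma rootDist_mul_lik_le_marg (hθ : θ ∈ Set.Icc (0 : ℝ) 1) (htr : ∀ i j, 0 ≤ trans θ lam i j)
    (i : Fin 4) (A : Config d n) : rootDist θ i * lik θ lam d n i A ≤ marg θ lam d n A :=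
  single_le_sum (f := fun i => rootDist θ i * lik θ lam d n i A)
    (fun j _ => mul_nonneg (rootDist_nonneg hθ j) (lik_nonneg htr n j A)) (mem_univ i)

lemma marg_mul_post (hθ : θ ∈ Set.Icc (0 : ℝ) 1) (htr : ∀ i j, 0 ≤ trans θ lam i j)
    (i : Fin 4) (A : Config d n) :
    marg θ lam d n A * post θ lam d n i A = rootDist θ i * lik θ lam d n i A := by
  rcases eq_or_ne (marg θ lam d n A) 0 with h | h
  · have := rootDist_mul_lik_le_marg hθ htr i A
    rw [h] at this ⊢
    linarith [mul_nonneg (rootDist_nonneg hθ i) (lik_nonneg htr n i A)]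
  · exact mul_div_cancel₀ _ h

lemma post_le_one (hθ : θ ∈ Set.Icc (0 : ℝ) 1) (htr : ∀ i j, 0 ≤ trans θ lam i j)
    (i : Fin 4) (A : Config d n) : post θ lam d n i A ≤ 1 :=
  div_le_one_of_le₀ (rootDist_mul_lik_le_marg hθ htr i A) (marg_nonneg hθ htr A)

lemma uncondE_post (hθ : θ ∈ Set.Icc (0 : ℝ) 1) (htr : ∀ i j, 0 ≤ trans θ lam i j)
    (i : Fin 4) : uncondE θ lam d n (post θ lam d n i) = rootDist θ i := by
  simp only [uncondE, marg_mul_post hθ htr, ← mul_sum, sum_lik, mul_one]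

lemma uncondE_sq_post_sub (hθ : θ ∈ Set.Icc (0 : ℝ) 1) (htr : ∀ i j, 0 ≤ trans θ lam i j) :
    uncondE θ lam d n (fun A => (post θ lam d n 0 A - θ / 2) ^ 2) = θ / 2 * xT θ lam d n := by
  have hA (A : Config d n) : marg θ lam d n A * (post θ lam d n 0 A - θ / 2) ^ 2
      = θ / 2 * (lik θ lam d n 0 A * post θ lam d n 0 A) - θ ^ 2 / 2 * lik θ lam d n 0 A
        + θ ^ 2 / 4 * marg θ lam d n A := by
    rw [show marg θ lam d n A * (post θ lam d n 0 A - θ / 2) ^ 2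
        = marg θ lam d n A * post θ lam d n 0 A * (post θ lam d n 0 A - θ)
          + θ ^ 2 / 4 * marg θ lam d n A by ring, marg_mul_post hθ htr, rootDist_zero]
    ring
  simp only [uncondE, hA, sum_add_distrib, sum_sub_distrib, ← mul_sum, sum_lik, sum_marg]
  unfold xT condE
  ring

lemma xT_nonneg (hθ : θ ∈ Set.Ioo (0 : ℝ) 1) (htr : ∀ i j, 0 ≤ trans θ lam i j) :
    0 ≤ xT θ lam d n := by
  have hvar : 0 ≤ θ / 2 * xT θ lam d n := by
    rw [← uncondE_sq_post_sub (Set.Ioo_subset_Icc_self hθ) htr]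
    exact sum_nonneg fun A _ => mul_nonneg (marg_nonneg (Set.Ioo_subset_Icc_self hθ) htr A)
      (sq_nonneg _)
  exact nonneg_of_mul_nonneg_right hvar (by linarith [hθ.1])

lemma xT_le_one (hθ : θ ∈ Set.Icc (0 : ℝ) 1) (htr : ∀ i j, 0 ≤ trans θ lam i j) :
    xT θ lam d n ≤ 1 := by
  have : condE θ lam d n 0 (post θ lam d n 0) ≤ ∑ A, lik θ lam d n 0 A :=
    sum_le_sum fun A _ => mul_le_of_le_one_right (lik_nonneg htr n 0 A) (post_le_one hθ htr 0 A)
  rw [sum_lik] at this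
  unfold xT
  linarith [hθ.1]

lemma condE_Zf_zero (hθ : θ ∈ Set.Icc (0 : ℝ) 1) (htr : ∀ i j, 0 ≤ trans θ lam i j) :
    condE θ lam d (n + 1) 0 (Zf θ lam d n 0) = (1 + 2 * lam ^ 2 / θ * xT θ lam d n) ^ d := by
  have hZ : Zf θ lam d n 0
      = fun A => ∏ j, (1 + 2 * lam / θ * (post θ lam d n 0 (restrict j A) - θ / 2)) := by
    funext A
    simp [Zf, Yf]
  rw [hZ, condE_prod_restrict n 0 fun B => 1 + 2 * lam / θ * (post θ lam d n 0 B - θ / 2),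
    sum_trans_mul_condE, condE_affine, uncondE_affine,
    uncondE_post hθ htr, rootDist_zero]
  unfold xT condE
  ring

end Posterior

-- `binomTail d t = ∑_{k ≥ 3} (d choose k) tᵏ`
def binomTail (d : ℕ) (t : ℝ) : ℝ := (1 + t) ^ d - 1 - d * t - d.choose 2 * t ^ 2

lemma binomTail_zero (t : ℝ) : binomTail 0 t = 0 := by simp [binomTail]

lemma binomTail_succ (d : ℕ) (t : ℝ) :
    binomTail (d + 1) t = (1 + t) * binomTail d t + d.choose 2 * t ^ 3 := by
  simp only [binomTail, Nat.choose_succ_succ, Nat.choose_one_right]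
  push_cast
  ring

lemma binomTail_nonneg {t : ℝ} (ht : 0 ≤ t) (d : ℕ) : 0 ≤ binomTail d t := by
  induction d with
  | zero => simp [binomTail_zero]
  | succ d ih => rw [binomTail_succ]; positivity

lemma binomTail_mul_le {a x : ℝ} (ha : 0 ≤ a) (hx0 : 0 ≤ x) (hx1 : x ≤ 1) (d : ℕ) :
    binomTail d (a * x) ≤ x ^ 3 * binomTail d a := by
  induction d with
  | zero => simp [binomTail_zero]
  | succ d ih =>
    have hax : a * x ≤ a := mul_le_of_le_one_right ha hx1
    have := binomTail_nonneg (mul_nonneg ha hx0) d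
    calc binomTail (d + 1) (a * x)
        = (1 + a * x) * binomTail d (a * x) + d.choose 2 * (a * x) ^ 3 := binomTail_succ d _
      _ ≤ (1 + a) * (x ^ 3 * binomTail d a) + d.choose 2 * (a * x) ^ 3 := by gcongr
      _ = x ^ 3 * binomTail (d + 1) a := by rw [binomTail_succ]; ring

lemma binomTail_le_exp {a : ℝ} (ha : 0 ≤ a) (d : ℕ) : binomTail d a ≤ Real.exp (d * a) :=
  calc binomTail d a ≤ (1 + a) ^ d := by
        have : 0 ≤ d * a + d.choose 2 * a ^ 2 := by positivity
        unfold binomTail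
        linarith
    _ ≤ Real.exp a ^ d := by gcongr; linarith [Real.add_one_le_exp a]
    _ = Real.exp (d * a) := (Real.exp_nat_mul a d).symm

/-- There is a constant `C` depending only on `θ` such that
`|E Z₁ - 1 - (2/θ)dλ²x_{n;θ} - (2/θ²)d(d-1)λ⁴x_{n;θ}²| ≤ C·x_{n;θ}³`. -/
theorem EZ1_expansion (θ : ℝ) (hθ : θ ∈ Set.Ioo (0 : ℝ) 1) :
    ∃ C : ℝ, ∀ d : ℕ, 2 ≤ d → ∀ lam : ℝ, |lam| ≤ 1 →
      (∀ i j : Fin 4, 0 ≤ trans θ lam i j) → (d : ℝ) * lam ^ 2 ≤ 1 → ∀ n : ℕ,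
      |condE θ lam d (n + 1) 0 (fun A => Zf θ lam d n 0 A) - 1
          - 2 / θ * ((d : ℝ) * lam ^ 2) * xT θ lam d n
          - 2 / θ ^ 2 * ((d : ℝ) * ((d : ℝ) - 1) * lam ^ 4) * xT θ lam d n ^ 2|
        ≤ C * xT θ lam d n ^ 3 := by
  refine ⟨Real.exp (2 / θ), fun d _ lam _ htr hdl n => ?_⟩
  have hθ' := Set.Ioo_subset_Icc_self hθ
  set x := xT θ lam d n
  have ha : 0 ≤ 2 * lam ^ 2 / θ := div_nonneg (by positivity) hθ'.1
  have hx0 : 0 ≤ x := xT_nonneg hθ htr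
  have hexpand : condE θ lam d (n + 1) 0 (fun A => Zf θ lam d n 0 A) - 1
      - 2 / θ * ((d : ℝ) * lam ^ 2) * x - 2 / θ ^ 2 * ((d : ℝ) * ((d : ℝ) - 1) * lam ^ 4) * x ^ 2
      = binomTail d (2 * lam ^ 2 / θ * x) := by
    rw [condE_Zf_zero hθ' htr, binomTail, Nat.cast_choose_two]
    ring
  have hexp : (d : ℝ) * (2 * lam ^ 2 / θ) ≤ 2 / θ := by
    rw [mul_div_assoc', mul_left_comm]
    exact div_le_div_of_nonneg_right (by linarith) hθ'.1
  rw [hexpand, abs_of_nonneg (binomTail_nonneg (mul_nonneg ha hx0) d)]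
  calc binomTail d (2 * lam ^ 2 / θ * x)
      ≤ x ^ 3 * binomTail d (2 * lam ^ 2 / θ) := binomTail_mul_le ha hx0 (xT_le_one hθ' htr) d
    _ ≤ x ^ 3 * Real.exp (2 / θ) := by
        gcongr
        exact (binomTail_le_exp ha d).trans (Real.exp_le_exp.2 hexp)
    _ = Real.exp (2 / θ) * x ^ 3 := mul_comm _ _

end Broadcast
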